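/- arXiv:2209.01336 — 3 statements merged into one kernel-verified Lean document; each statement's English description precedes it below -/
import Mathlib

section
/- Let L ∈ ℝ^{N×N} have SVD L = Σ_k σ_k u_k v_kᵀ with singular values 0 = σ₀ ≤ … ≤ σ_{N−1} in nondecreasing order and orthonormal systems {u_k}, {v_k}. For 1 ≤ M ≤ N and x ∈ ℝ^N define the bandlimited approximation x_M = (1/2) Σ_{k=0}^{M−1} (u_k u_kᵀ + v_k v_kᵀ) x. If σ_{M−1} > 0, then ‖x − x_M‖₂ ≤ (1/(2σ_{M−1})) (‖Lx‖₂ + ‖Lᵀx‖₂). -/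
/-!
With `a = Uᵀ x` and `b = Vᵀ x` the coefficients of `x` in the two orthonormal bases,
`L = U diag(σ) Vᵀ` gives `‖L x‖ = ‖σ b‖` and `‖Lᵀ x‖ = ‖σ a‖`, while
`x - x_M = ½ (U a_{≥M} + V b_{≥M})` involves only the coefficients of index at least `M`, where
`σ ≥ σ_{M-1}`. Hence `σ_{M-1} ‖a_{≥M}‖ ≤ ‖σ a‖`, likewise for `b`, and the triangle inequality
together with the orthogonality of `U` and `V` gives the bound.
-/

open Matrix Finset

section EuclideanNorm

variable {ι : Type*} [Fintype ι]

theorem sqrt_sum_sq_eq_norm_toLp (f : ι → ℝ) : √(∑ i, f i ^ 2) = ‖WithLp.toLp 2 f‖ := by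
  simp [EuclideanSpace.norm_eq]

theorem norm_toLp_le_of_abs_le {f g : ι → ℝ} (h : ∀ i, |f i| ≤ |g i|) :
    ‖WithLp.toLp 2 f‖ ≤ ‖WithLp.toLp 2 g‖ := by
  simp only [EuclideanSpace.norm_eq, Real.norm_eq_abs]
  exact Real.sqrt_le_sqrt (Finset.sum_le_sum fun i _ => pow_le_pow_left₀ (abs_nonneg _) (h i) 2)

theorem norm_toLp_mulVec_of_transpose_mul_self {m : Type*} [Fintype m] [DecidableEq ι]
    {W : Matrix m ι ℝ} (hW : Wᵀ * W = 1) (v : ι → ℝ) :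
    ‖WithLp.toLp 2 (W *ᵥ v)‖ = ‖WithLp.toLp 2 v‖ := by
  rw [← sq_eq_sq₀ (norm_nonneg _) (norm_nonneg _), EuclideanSpace.real_norm_sq_eq,
    EuclideanSpace.real_norm_sq_eq]
  simp only [sq]
  change W *ᵥ v ⬝ᵥ W *ᵥ v = v ⬝ᵥ v
  rw [dotProduct_mulVec, ← mulVec_transpose, mulVec_mulVec, hW, one_mulVec]

theorem mul_norm_toLp_indicator_Ioi_le [Preorder ι] {σ : ι → ℝ} (hσ : Monotone σ) {m : ι}
    (hm : 0 ≤ σ m) (a : ι → ℝ) :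
    σ m * ‖WithLp.toLp 2 ((Set.Ioi m).indicator a)‖ ≤ ‖WithLp.toLp 2 (σ * a)‖ := by
  rw [← Real.norm_of_nonneg hm, ← norm_smul, ← WithLp.toLp_smul]
  refine norm_toLp_le_of_abs_le fun k => ?_
  by_cases hk : m < k
  · simp only [Pi.smul_apply, Set.indicator_of_mem (Set.mem_Ioi.2 hk), Pi.mul_apply, smul_eq_mul,
      abs_mul]
    gcongr
    exact hσ hk.le
  · rw [Pi.smul_apply, Set.indicator_of_notMem (mt Set.mem_Ioi.1 hk), smul_zero, abs_zero]
    exact abs_nonneg _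

theorem norm_toLp_half_add_mulVec_le {m : Type*} [Fintype m] [DecidableEq ι] {U V : Matrix m ι ℝ}
    (hU : Uᵀ * U = 1) (hV : Vᵀ * V = 1) (p q : ι → ℝ) :
    ‖WithLp.toLp 2 ((1 / 2 : ℝ) • (U *ᵥ p + V *ᵥ q))‖ ≤
      (‖WithLp.toLp 2 p‖ + ‖WithLp.toLp 2 q‖) / 2 := by
  rw [WithLp.toLp_smul, norm_smul, WithLp.toLp_add, Real.norm_of_nonneg (by norm_num),
    one_div_mul_eq_div]
  gcongr
  exact (norm_add_le _ _).trans_eq (by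
    rw [norm_toLp_mulVec_of_transpose_mul_self hU, norm_toLp_mulVec_of_transpose_mul_self hV])

end EuclideanNorm

section ColumnExpansion

variable {R m n k : Type*} [Fintype k]

theorem sum_smul_vecMulVec_col [CommSemiring R] [DecidableEq k] (A : Matrix m k R)
    (B : Matrix n k R) (d : k → R) :
    ∑ j, d j • vecMulVec (fun i => A i j) (fun i => B i j) = A * diagonal d * Bᵀ := by
  ext i l
  rw [mul_apply, Matrix.sum_apply]
  refine Finset.sum_congr rfl fun j _ => ?_
  simp only [Matrix.smul_apply, vecMulVec_apply, mul_diagonal, transpose_apply, smul_eq_mul]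
  ring

theorem mul_diagonal_mul_mulVec [CommSemiring R] [DecidableEq k] [Fintype n] (A : Matrix m k R)
    (d : k → R) (B : Matrix k n R) (v : n → R) :
    (A * diagonal d * B) *ᵥ v = A *ᵥ (d * (B *ᵥ v)) := by
  rw [← mulVec_mulVec, ← mulVec_mulVec]
  congr 1
  ext j
  exact mulVec_diagonal _ _ _

theorem sum_vecMulVec_col_mulVec [CommSemiring R] [Fintype n] (s : Finset k) (A : Matrix m k R)
    (B : Matrix n k R) (v : n → R) :
    ∑ j ∈ s, vecMulVec (fun i => A i j) (fun i => B i j) *ᵥ v =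
      A *ᵥ (s : Set k).indicator (Bᵀ *ᵥ v) := by
  ext i
  rw [Finset.sum_apply, mulVec, dotProduct, Finset.sum_indicator_subset_of_eq_zero _
    (fun j y => A i j * y) (Finset.subset_univ s) fun _ => mul_zero _]
  refine Finset.sum_congr rfl fun j _ => ?_
  simp only [mulVec, dotProduct, vecMulVec_apply, transpose_apply, Finset.mul_sum, mul_assoc]

theorem sub_mulVec_indicator [CommRing R] [Fintype m] [DecidableEq m] {U : Matrix m k R}
    (hU : U * Uᵀ = 1) (s : Set k) (x : m → R) :
    x - U *ᵥ s.indicator (Uᵀ *ᵥ x) = U *ᵥ sᶜ.indicator (Uᵀ *ᵥ x) := by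
  calc x - U *ᵥ s.indicator (Uᵀ *ᵥ x)
      = U *ᵥ (s.indicator (Uᵀ *ᵥ x) + sᶜ.indicator (Uᵀ *ᵥ x)) - U *ᵥ s.indicator (Uᵀ *ᵥ x) := by
        rw [Set.indicator_self_add_compl, mulVec_mulVec, hU, one_mulVec]
    _ = U *ᵥ sᶜ.indicator (Uᵀ *ᵥ x) := by rw [mulVec_add, add_sub_cancel_left]

theorem sub_half_sum_vecMulVec_col_mulVec {K : Type*} [Field K] [CharZero K] [Fintype m]
    [DecidableEq m] {U V : Matrix m k K} (hU : U * Uᵀ = 1) (hV : V * Vᵀ = 1) (s : Finset k)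
    (x : m → K) :
    x - (1 / 2 : K) • ∑ j ∈ s, (vecMulVec (fun i => U i j) (fun i => U i j) +
        vecMulVec (fun i => V i j) (fun i => V i j)) *ᵥ x =
      (1 / 2 : K) • (U *ᵥ (s : Set k)ᶜ.indicator (Uᵀ *ᵥ x) +
        V *ᵥ (s : Set k)ᶜ.indicator (Vᵀ *ᵥ x)) := by
  rw [← sub_mulVec_indicator hU, ← sub_mulVec_indicator hV, ← sum_vecMulVec_col_mulVec,
    ← sum_vecMulVec_col_mulVec]
  simp only [add_mulVec, Finset.sum_add_distrib]
  module

end ColumnExpansion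

/-- Bandlimiting approximation bound for the SVD-based graph Fourier transform:
`‖x − x_M‖₂ ≤ (‖Lx‖₂ + ‖Lᵀx‖₂) / (2 σ_{M−1})`. -/
theorem gft_bandlimiting_bound {N : ℕ}
    (L U V : Matrix (Fin N) (Fin N) ℝ) (σ : Fin N → ℝ)
    (hU : Uᵀ * U = 1) (hV : Vᵀ * V = 1)
    (hσmono : Monotone σ)
    (hL : L = ∑ k, σ k • vecMulVec (fun i => U i k) (fun i => V i k))
    (x : Fin N → ℝ) (M : ℕ) (hM1 : 1 ≤ M) (hMN : M ≤ N)
    (hcut : 0 < σ ⟨M - 1, by omega⟩)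
    (xM : Fin N → ℝ)
    (hxM : xM = (1 / 2 : ℝ) •
      ∑ k ∈ Finset.univ.filter (fun k : Fin N => (k : ℕ) < M),
        (vecMulVec (fun i => U i k) (fun i => U i k) +
          vecMulVec (fun i => V i k) (fun i => V i k)).mulVec x) :
    Real.sqrt (∑ i, (x i - xM i) ^ 2) ≤
      (1 / (2 * σ ⟨M - 1, by omega⟩)) *
        (Real.sqrt (∑ i, (L.mulVec x i) ^ 2) +
          Real.sqrt (∑ i, (Lᵀ.mulVec x i) ^ 2)) := by
  set m : Fin N := ⟨M - 1, by omega⟩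
  have hlow : Finset.univ.filter (fun k : Fin N => (k : ℕ) < M) = Finset.Iic m := by
    ext k
    simp only [Finset.mem_filter, Finset.mem_univ, true_and, Finset.mem_Iic, Fin.le_def, m]
    omega
  have hres := sub_half_sum_vecMulVec_col_mulVec (mul_eq_one_comm.mp hU) (mul_eq_one_comm.mp hV)
    (Finset.Iic m) x
  rw [Finset.coe_Iic, Set.compl_Iic, ← hlow, ← hxM] at hres
  have hLx : L *ᵥ x = U *ᵥ (σ * (Vᵀ *ᵥ x)) := by
    rw [hL, sum_smul_vecMulVec_col, mul_diagonal_mul_mulVec]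
  have hLTx : Lᵀ *ᵥ x = V *ᵥ (σ * (Uᵀ *ᵥ x)) := by
    rw [hL, sum_smul_vecMulVec_col, transpose_mul, transpose_mul, transpose_transpose,
      diagonal_transpose, ← Matrix.mul_assoc, mul_diagonal_mul_mulVec]
  calc √(∑ i, (x i - xM i) ^ 2) = ‖WithLp.toLp 2 (x - xM)‖ := sqrt_sum_sq_eq_norm_toLp _
    _ ≤ (‖WithLp.toLp 2 ((Set.Ioi m).indicator (Uᵀ *ᵥ x))‖
          + ‖WithLp.toLp 2 ((Set.Ioi m).indicator (Vᵀ *ᵥ x))‖) / 2 :=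
      hres ▸ norm_toLp_half_add_mulVec_le hU hV _ _
    _ ≤ (‖WithLp.toLp 2 (σ * (Uᵀ *ᵥ x))‖ / σ m + ‖WithLp.toLp 2 (σ * (Vᵀ *ᵥ x))‖ / σ m) / 2 := by
      gcongr <;>
        exact (le_div_iff₀' hcut).2 (mul_norm_toLp_indicator_Ioi_le hσmono hcut.le _)
    _ = _ := by
      rw [sqrt_sum_sq_eq_norm_toLp, sqrt_sum_sq_eq_norm_toLp, hLx, hLTx,
        norm_toLp_mulVec_of_transpose_mul_self hU, norm_toLp_mulVec_of_transpose_mul_self hV]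
      field_simp
      ring
end

section
/- Let L_l = Σ_i σ_{l,i} u_{l,i} v_{l,i}ᵀ (l = 1, 2) be SVDs of L₁ ∈ ℝ^{N₁×N₁}, L₂ ∈ ℝ^{N₂×N₂} with nonnegative singular values and orthonormal systems. Let μ₀ ≤ μ₁ ≤ … ≤ μ_{N−1} (N = N₁N₂) be the values σ_{1,i} + σ_{2,j} arranged in ascending order, let 1 ≤ M ≤ N with μ_{M−1} > 0, let S_M be the set of pairs (i,j) with σ_{1,i} + σ_{2,j} equal to some μ_k with 0 ≤ k ≤ M−1, and define x_{M,⊗} = (1/2) Σ_{(i,j)∈S_M} [ (u_{1,i}⊗u_{2,j})(u_{1,i}⊗u_{2,j})ᵀ + (v_{1,i}⊗v_{2,j})(v_{1,i}⊗v_{2,j})ᵀ ] x. Then ‖x − x_{M,⊗}‖₂ ≤ (1/(2μ_{M−1})) ( ‖(L₁⊗I_{N₂})x‖₂ + ‖(L₁ᵀ⊗I_{N₂})x‖₂ + ‖(I_{N₁}⊗L₂)x‖₂ + ‖(I_{N₁}⊗L₂ᵀ)x‖₂ ). -/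
open Matrix Finset
open scoped Kronecker Classical

/-!
The products `u₁ᵢ ⊗ u₂ⱼ` and `v₁ᵢ ⊗ v₂ⱼ` form two orthonormal bases, and `x - x_{M,⊗}` is the
average of the residuals of `x` after projecting onto the span of the basis vectors indexed by
`S_M`. The SVD relations `L v = σ u`, `Lᵀ u = σ v` give
`(σ₁ᵢ + σ₂ⱼ) ⟨u₁ᵢ ⊗ u₂ⱼ, x⟩ = ⟨v₁ᵢ ⊗ u₂ⱼ, (L₁ᵀ ⊗ I) x⟩ + ⟨u₁ᵢ ⊗ v₂ⱼ, (I ⊗ L₂ᵀ) x⟩`,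
and off `S_M` the factor `σ₁ᵢ + σ₂ⱼ` is at least `μ_{M-1}`. Bessel's inequality for the
orthonormal families `v₁ ⊗ u₂` and `u₁ ⊗ v₂` then bounds `μ_{M-1}` times the first residual by
`‖(L₁ᵀ ⊗ I) x‖ + ‖(I ⊗ L₂ᵀ) x‖`, and symmetrically for the second.
-/

section Kronecker

variable {R l m n p : Type*} [CommSemiring R]

def kronVec (f : m → R) (g : n → R) : m × n → R := fun q => f q.1 * g q.2

theorem kronVec_smul_left (c : R) (f : m → R) (g : n → R) :
    kronVec (c • f) g = c • kronVec f g := by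
  ext q; simp [kronVec, mul_assoc]

theorem kronVec_smul_right (c : R) (f : m → R) (g : n → R) :
    kronVec f (c • g) = c • kronVec f g := by
  ext q; simp [kronVec, mul_left_comm]

variable [Fintype m] [Fintype n]

theorem kronVec_dotProduct_kronVec (f f' : m → R) (g g' : n → R) :
    kronVec f g ⬝ᵥ kronVec f' g' = (f ⬝ᵥ f') * (g ⬝ᵥ g') := by
  simp only [kronVec, dotProduct, Fintype.sum_prod_type, sum_mul_sum]
  exact sum_congr rfl fun _ _ => sum_congr rfl fun _ _ => by ring

theorem kronecker_mulVec_kronVec (A : Matrix l m R) (B : Matrix p n R) (f : m → R) (g : n → R) :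
    (A ⊗ₖ B) *ᵥ kronVec f g = kronVec (A *ᵥ f) (B *ᵥ g) := by
  ext q
  simp only [kronVec, mulVec, dotProduct, kroneckerMap_apply, Fintype.sum_prod_type,
    sum_mul_sum]
  exact sum_congr rfl fun _ _ => sum_congr rfl fun _ _ => by ring

theorem add_mul_kronVec_dotProduct [DecidableEq m] [DecidableEq n]
    {A : Matrix m m R} {B : Matrix n n R} {f g : m → R} {f' g' : n → R} {s t : R}
    (hA : A *ᵥ f = s • g) (hB : B *ᵥ f' = t • g') (x : m × n → R) :
    (s + t) * (kronVec g g' ⬝ᵥ x) =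
      kronVec f g' ⬝ᵥ (Aᵀ ⊗ₖ (1 : Matrix n n R)) *ᵥ x +
        kronVec g f' ⬝ᵥ ((1 : Matrix m m R) ⊗ₖ Bᵀ) *ᵥ x := by
  have hA1 : Aᵀ ⊗ₖ (1 : Matrix n n R) = (A ⊗ₖ 1)ᵀ := by
    rw [← kroneckerMap_transpose, transpose_one]
  have h1B : (1 : Matrix m m R) ⊗ₖ Bᵀ = (1 ⊗ₖ B)ᵀ := by
    rw [← kroneckerMap_transpose, transpose_one]
  rw [hA1, h1B, dotProduct_mulVec, dotProduct_mulVec, vecMul_transpose, vecMul_transpose,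
    kronecker_mulVec_kronVec, kronecker_mulVec_kronVec, one_mulVec, one_mulVec, hA, hB,
    kronVec_smul_left, kronVec_smul_right, smul_dotProduct, smul_dotProduct, smul_eq_mul,
    smul_eq_mul, add_mul]

def kronProj {ι κ : Type*} (f : ι → m → R) (g : κ → n → R) (S : Finset (ι × κ))
    (x : m × n → R) : m × n → R :=
  ∑ p ∈ S, (kronVec (f p.1) (g p.2) ⬝ᵥ x) • kronVec (f p.1) (g p.2)

end Kronecker

section SVD

variable {R ι m n : Type*} [CommSemiring R] [Fintype ι] [DecidableEq ι]

theorem mulVec_eq_smul_of_eq_sum_vecMulVec [Fintype n] {L : Matrix m n R} {σ : ι → R}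
    {u : ι → m → R} {v : ι → n → R} (hv : ∀ i i', v i ⬝ᵥ v i' = if i = i' then 1 else 0)
    (hL : L = ∑ i, σ i • vecMulVec (u i) (v i)) (i : ι) :
    L *ᵥ v i = σ i • u i := by
  simp [hL, sum_mulVec, smul_mulVec, vecMulVec_mulVec, hv]

theorem transpose_mulVec_eq_smul_of_eq_sum_vecMulVec [Fintype m] {L : Matrix m n R}
    {σ : ι → R} {u : ι → m → R} {v : ι → n → R}
    (hu : ∀ i i', u i ⬝ᵥ u i' = if i = i' then 1 else 0)
    (hL : L = ∑ i, σ i • vecMulVec (u i) (v i)) (i : ι) :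
    Lᵀ *ᵥ u i = σ i • v i :=
  mulVec_eq_smul_of_eq_sum_vecMulVec hu (by simp [hL, transpose_sum, transpose_vecMulVec]) i

end SVD

section Euclidean

variable {ι m n : Type*} [Fintype m] [Fintype n]

theorem real_inner_toLp_toLp (f g : m → ℝ) :
    inner ℝ (WithLp.toLp 2 f) (WithLp.toLp 2 g) = f ⬝ᵥ g := by
  rw [EuclideanSpace.inner_toLp_toLp, star_trivial, dotProduct_comm]

theorem norm_toLp_eq_sqrt_sum_sq (f : m → ℝ) : ‖WithLp.toLp 2 f‖ = √(∑ i, f i ^ 2) := by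
  simp [EuclideanSpace.norm_eq]

theorem orthonormal_toLp_kronVec {κ : Type*} [DecidableEq ι] [DecidableEq κ]
    {f : ι → m → ℝ} {g : κ → n → ℝ}
    (hf : ∀ i i', f i ⬝ᵥ f i' = if i = i' then 1 else 0)
    (hg : ∀ j j', g j ⬝ᵥ g j' = if j = j' then 1 else 0) :
    Orthonormal ℝ fun p : ι × κ => WithLp.toLp 2 (kronVec (f p.1) (g p.2)) := by
  rw [orthonormal_iff_ite]
  rintro ⟨i, j⟩ ⟨i', j'⟩
  rw [real_inner_toLp_toLp, kronVec_dotProduct_kronVec, hf, hg]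
  by_cases i = i' <;> by_cases j = j' <;> simp [*]

end Euclidean

section Orthonormal

variable {ι E : Type*} [NormedAddCommGroup E] [InnerProductSpace ℝ E] {v : ι → E}

theorem Orthonormal.norm_sq_sum_smul (hv : Orthonormal ℝ v) (c : ι → ℝ) (s : Finset ι) :
    ‖∑ p ∈ s, c p • v p‖ ^ 2 = ∑ p ∈ s, c p ^ 2 := by
  rw [← real_inner_self_eq_norm_sq, hv.inner_sum]
  simp [sq]

theorem Orthonormal.norm_sum_smul_le (hv : Orthonormal ℝ v) {c d : ι → ℝ} {s : Finset ι}
    (h : ∀ p ∈ s, |c p| ≤ |d p|) : ‖∑ p ∈ s, c p • v p‖ ≤ ‖∑ p ∈ s, d p • v p‖ := by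
  rw [← sq_le_sq₀ (norm_nonneg _) (norm_nonneg _), hv.norm_sq_sum_smul, hv.norm_sq_sum_smul]
  exact sum_le_sum fun p hp => sq_le_sq.2 (h p hp)

theorem Orthonormal.norm_sum_inner_smul_le (hv : Orthonormal ℝ v) {w : ι → E}
    (hw : Orthonormal ℝ w) (y : E) (s : Finset ι) :
    ‖∑ p ∈ s, inner ℝ (w p) y • v p‖ ≤ ‖y‖ := by
  rw [← sq_le_sq₀ (norm_nonneg _) (norm_nonneg _), hv.norm_sq_sum_smul]
  simpa [Real.norm_eq_abs, sq_abs] using hw.sum_inner_products_le y (s := s)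

theorem Orthonormal.mul_norm_sub_sum_le [Fintype ι] [FiniteDimensional ℝ E]
    (hv : Orthonormal ℝ v) (hcard : Fintype.card ι = Module.finrank ℝ E) {w z : ι → E}
    (hw : Orthonormal ℝ w) (hz : Orthonormal ℝ z) (s : Finset ι) {μ : ℝ} {c : ι → ℝ} (hμ : 0 ≤ μ)
    (hc : ∀ p ∉ s, μ ≤ c p) {x y₁ y₂ : E}
    (hrel : ∀ p ∉ s, c p * inner ℝ (v p) x = inner ℝ (w p) y₁ + inner ℝ (z p) y₂) :
    μ * ‖x - ∑ p ∈ s, inner ℝ (v p) x • v p‖ ≤ ‖y₁‖ + ‖y₂‖ := by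
  have hx : ∑ p, inner ℝ (v p) x • v p = x := by
    simpa using (OrthonormalBasis.mk hv
      (hv.linearIndependent.span_eq_top_of_card_eq_finrank' hcard).ge).sum_repr' x
  have hres : x - ∑ p ∈ s, inner ℝ (v p) x • v p = ∑ p ∈ sᶜ, inner ℝ (v p) x • v p := by
    rw [sub_eq_iff_eq_add', sum_add_sum_compl, hx]
  calc μ * ‖x - ∑ p ∈ s, inner ℝ (v p) x • v p‖
      = ‖μ • ∑ p ∈ sᶜ, inner ℝ (v p) x • v p‖ := by
        rw [hres, norm_smul, Real.norm_of_nonneg hμ]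
    _ = ‖∑ p ∈ sᶜ, (μ * inner ℝ (v p) x) • v p‖ := by simp only [smul_sum, smul_smul]
    _ ≤ ‖∑ p ∈ sᶜ, (c p * inner ℝ (v p) x) • v p‖ := by
        refine hv.norm_sum_smul_le fun p hp => ?_
        rw [abs_mul, abs_mul]
        exact mul_le_mul_of_nonneg_right (abs_le_abs_of_nonneg hμ (hc p (mem_compl.1 hp)))
          (abs_nonneg _)
    _ = ‖∑ p ∈ sᶜ, inner ℝ (w p) y₁ • v p + ∑ p ∈ sᶜ, inner ℝ (z p) y₂ • v p‖ := by
        rw [← sum_add_distrib]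
        refine congrArg _ (sum_congr rfl fun p hp => ?_)
        rw [hrel p (mem_compl.1 hp), add_smul]
    _ ≤ ‖y₁‖ + ‖y₂‖ :=
        (norm_add_le _ _).trans
          (add_le_add (hv.norm_sum_inner_smul_le hw y₁ _) (hv.norm_sum_inner_smul_le hz y₂ _))

end Orthonormal

theorem mul_norm_sub_sum_kronVec_le {m n : Type*} [Fintype m] [DecidableEq m] [Fintype n]
    [DecidableEq n] {A : Matrix m m ℝ} {B : Matrix n n ℝ} {s : m → ℝ} {t : n → ℝ}
    {f g : m → m → ℝ} {f' g' : n → n → ℝ}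
    (hf : ∀ i i', f i ⬝ᵥ f i' = if i = i' then 1 else 0)
    (hg : ∀ i i', g i ⬝ᵥ g i' = if i = i' then 1 else 0)
    (hf' : ∀ j j', f' j ⬝ᵥ f' j' = if j = j' then 1 else 0)
    (hg' : ∀ j j', g' j ⬝ᵥ g' j' = if j = j' then 1 else 0)
    (hA : ∀ i, A *ᵥ f i = s i • g i) (hB : ∀ j, B *ᵥ f' j = t j • g' j)
    (S : Finset (m × n)) {μ : ℝ} (hμ : 0 ≤ μ) (hS : ∀ p ∉ S, μ ≤ s p.1 + t p.2)
    (x : m × n → ℝ) :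
    μ * ‖WithLp.toLp 2 (x - kronProj g g' S x)‖ ≤
      ‖WithLp.toLp 2 ((Aᵀ ⊗ₖ (1 : Matrix n n ℝ)) *ᵥ x)‖ +
        ‖WithLp.toLp 2 (((1 : Matrix m m ℝ) ⊗ₖ Bᵀ) *ᵥ x)‖ := by
  have h := (orthonormal_toLp_kronVec hg hg').mul_norm_sub_sum_le (by simp)
    (orthonormal_toLp_kronVec hf hg') (orthonormal_toLp_kronVec hg hf') S hμ hS
    (x := WithLp.toLp 2 x) (y₁ := WithLp.toLp 2 ((Aᵀ ⊗ₖ (1 : Matrix n n ℝ)) *ᵥ x))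
    (y₂ := WithLp.toLp 2 (((1 : Matrix m m ℝ) ⊗ₖ Bᵀ) *ᵥ x)) fun p _ => by
      simp only [real_inner_toLp_toLp]
      exact add_mul_kronVec_dotProduct (hA p.1) (hB p.2) x
  simpa [kronProj, real_inner_toLp_toLp] using h

theorem Monotone.le_apply_of_forall_lt_ne {α : Type*} [Preorder α] {N M : ℕ} {f : Fin N → α}
    (hf : Monotone f) (hM : M - 1 < N) (i : Fin N)
    (hi : ∀ k : Fin N, (k : ℕ) < M → f i ≠ f k) :
    f ⟨M - 1, hM⟩ ≤ f i :=
  hf (Fin.mk_le_of_le_val (by by_contra h; exact hi i (by omega) rfl))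

/-- Theorem 3: bandlimiting approximation bound for the factor-wise graph
Fourier transform `F_⊗` on the Cartesian product of two directed graphs. -/
theorem gft_otimes_bandlimiting_bound {N₁ N₂ : ℕ}
    (L₁ : Matrix (Fin N₁) (Fin N₁) ℝ) (L₂ : Matrix (Fin N₂) (Fin N₂) ℝ)
    (σ₁ : Fin N₁ → ℝ) (σ₂ : Fin N₂ → ℝ)
    (u₁ v₁ : Fin N₁ → (Fin N₁ → ℝ)) (u₂ v₂ : Fin N₂ → (Fin N₂ → ℝ))
    (hu₁ : ∀ i i', dotProduct (u₁ i) (u₁ i') = if i = i' then 1 else 0)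
    (hv₁ : ∀ i i', dotProduct (v₁ i) (v₁ i') = if i = i' then 1 else 0)
    (hu₂ : ∀ j j', dotProduct (u₂ j) (u₂ j') = if j = j' then 1 else 0)
    (hv₂ : ∀ j j', dotProduct (v₂ j) (v₂ j') = if j = j' then 1 else 0)
    (hL₁ : L₁ = ∑ i, σ₁ i • vecMulVec (u₁ i) (v₁ i))
    (hL₂ : L₂ = ∑ j, σ₂ j • vecMulVec (u₂ j) (v₂ j))
    -- `μ` is the ascending rearrangement of the sums `σ_{1,i} + σ_{2,j}`
    (μ : Fin (N₁ * N₂) → ℝ) (hμmono : Monotone μ)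
    (e : Fin N₁ × Fin N₂ ≃ Fin (N₁ * N₂))
    (hμ : ∀ p : Fin N₁ × Fin N₂, μ (e p) = σ₁ p.1 + σ₂ p.2)
    (M : ℕ) (hM1 : 1 ≤ M) (hMN : M ≤ N₁ * N₂)
    (hcut : 0 < μ ⟨M - 1, by omega⟩)
    (SM : Finset (Fin N₁ × Fin N₂))
    (hSM : SM = Finset.univ.filter (fun p : Fin N₁ × Fin N₂ =>
      ∃ k : Fin (N₁ * N₂), (k : ℕ) < M ∧ σ₁ p.1 + σ₂ p.2 = μ k))
    (x xM : Fin N₁ × Fin N₂ → ℝ)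
    (hxM : xM = (1 / 2 : ℝ) • ∑ p ∈ SM,
      (vecMulVec (fun q : Fin N₁ × Fin N₂ => u₁ p.1 q.1 * u₂ p.2 q.2)
          (fun q : Fin N₁ × Fin N₂ => u₁ p.1 q.1 * u₂ p.2 q.2) +
        vecMulVec (fun q : Fin N₁ × Fin N₂ => v₁ p.1 q.1 * v₂ p.2 q.2)
          (fun q : Fin N₁ × Fin N₂ => v₁ p.1 q.1 * v₂ p.2 q.2)).mulVec x) :
    Real.sqrt (∑ i, (x i - xM i) ^ 2) ≤
      (1 / (2 * μ ⟨M - 1, by omega⟩)) *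
        (Real.sqrt (∑ i, ((L₁ ⊗ₖ (1 : Matrix (Fin N₂) (Fin N₂) ℝ)).mulVec x i) ^ 2) +
          Real.sqrt (∑ i, ((L₁ᵀ ⊗ₖ (1 : Matrix (Fin N₂) (Fin N₂) ℝ)).mulVec x i) ^ 2) +
          Real.sqrt (∑ i, (((1 : Matrix (Fin N₁) (Fin N₁) ℝ) ⊗ₖ L₂).mulVec x i) ^ 2) +
          Real.sqrt (∑ i, (((1 : Matrix (Fin N₁) (Fin N₁) ℝ) ⊗ₖ L₂ᵀ).mulVec x i) ^ 2)) := by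
  set μ₀ := μ ⟨M - 1, by omega⟩
  have hS : ∀ p ∉ SM, μ₀ ≤ σ₁ p.1 + σ₂ p.2 := fun p hp => by
    rw [← hμ p]
    refine hμmono.le_apply_of_forall_lt_ne _ _ fun k hk h => hp ?_
    rw [hSM, mem_filter]
    exact ⟨mem_univ _, k, hk, (hμ p).symm.trans h⟩
  have hU := mul_norm_sub_sum_kronVec_le hv₁ hu₁ hv₂ hu₂
    (mulVec_eq_smul_of_eq_sum_vecMulVec hv₁ hL₁) (mulVec_eq_smul_of_eq_sum_vecMulVec hv₂ hL₂)
    SM hcut.le hS x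
  have hV := mul_norm_sub_sum_kronVec_le hu₁ hv₁ hu₂ hv₂
    (transpose_mulVec_eq_smul_of_eq_sum_vecMulVec hu₁ hL₁)
    (transpose_mulVec_eq_smul_of_eq_sum_vecMulVec hu₂ hL₂) SM hcut.le hS x
  rw [transpose_transpose, transpose_transpose] at hV
  have hxM' : xM = (1 / 2 : ℝ) • (kronProj u₁ u₂ SM x + kronProj v₁ v₂ SM x) := by
    simp only [hxM, add_mulVec, vecMulVec_mulVec, op_smul_eq_smul, sum_add_distrib]
    rfl
  have hsplit : x - xM =
      (1 / 2 : ℝ) • (x - kronProj u₁ u₂ SM x) + (1 / 2 : ℝ) • (x - kronProj v₁ v₂ SM x) := by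
    rw [hxM']
    module
  simp only [← norm_toLp_eq_sqrt_sum_sq, ← Pi.sub_apply, hsplit]
  rw [WithLp.toLp_add, WithLp.toLp_smul, WithLp.toLp_smul, one_div_mul_eq_div,
    le_div_iff₀' (by linarith)]
  refine (mul_le_mul_of_nonneg_left (norm_add_le _ _) (by linarith)).trans ?_
  rw [norm_smul, norm_smul, Real.norm_of_nonneg (by norm_num)]
  linarith
end

section
/- Suppose L₁ ∈ ℝ^{N₁×N₁}, L₂ ∈ ℝ^{N₂×N₂}, U₁, V₁, U₂, V₂ are orthogonal matrices with L_l = U_l Σ_l V_lᵀ (Σ_l diagonal, nonnegative), and suppose the Kronecker sum L_□ = L₁ ⊗ I_{N₂} + I_{N₁} ⊗ L₂ admits a decomposition L_□ = (U₁⊗U₂) Σ (V₁⊗V₂)ᵀ for some diagonal matrix Σ with nonnegative diagonal entries. If neither L₁ nor L₂ is a scalar multiple of the identity (i.e., {I_{N₁}, L₁} and {I_{N₂}, L₂} are each linearly independent), then L₁ and L₂ are symmetric matrices. -/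
/-!
Conjugating by `U₁ ⊗ U₂` and `V₁ ⊗ V₂` turns the hypothesis into
`Σ₁ ⊗ (U₂ᵀ V₂) + (U₁ᵀ V₁) ⊗ Σ₂ = diagonal d`. As `L₂ ≠ 0`, some `σ₂ j ≠ 0`, and the off-diagonal
entries of the `(j, j)` blocks force `U₁ᵀ V₁` to be diagonal; likewise `U₂ᵀ V₂` is diagonal.
Once `Uᵀ V` is diagonal, `L = U Σ Vᵀ = V (Vᵀ U Σ) Vᵀ` is `V D Vᵀ` with `D` diagonal, hence
symmetric.
-/

open Matrix
open scoped Kronecker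

namespace Matrix

variable {ι κ R : Type*} [DecidableEq ι] [DecidableEq κ]

section Orthogonal

variable [Fintype ι] [Fintype κ]

theorem transpose_mul_mul_eq_diagonal [Semiring R] {L U V : Matrix ι ι R} {σ : ι → R}
    (hU : Uᵀ * U = 1) (hV : Vᵀ * V = 1) (hL : L = U * diagonal σ * Vᵀ) :
    Uᵀ * L * V = diagonal σ := by
  rw [hL, show Uᵀ * (U * diagonal σ * Vᵀ) * V = (Uᵀ * U) * diagonal σ * (Vᵀ * V) by
    simp only [Matrix.mul_assoc], hU, hV, Matrix.one_mul, Matrix.mul_one]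

theorem isSymm_of_eq_mul_diagonal_mul_transpose [CommSemiring R] {L U V : Matrix ι ι R}
    {σ : ι → R} (hV : Vᵀ * V = 1) (hL : L = U * diagonal σ * Vᵀ) (hUV : (Uᵀ * V).IsDiag) :
    L.IsSymm := by
  have hVU : Vᵀ * U = diagonal (Uᵀ * V).diag := by
    conv_lhs => rw [← transpose_transpose U, ← transpose_mul, ← hUV.diagonal_diag]
    exact diagonal_transpose _
  have hL' : L = V * (diagonal (Uᵀ * V).diag * diagonal σ) * Vᵀ := by
    rw [← hVU, ← Matrix.mul_assoc, ← Matrix.mul_assoc, mul_eq_one_comm.mp hV, Matrix.one_mul, hL]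
  rw [hL', diagonal_mul_diagonal, IsSymm, transpose_mul, transpose_mul, transpose_transpose,
    diagonal_transpose, Matrix.mul_assoc]

theorem kronecker_transpose_mul_self_eq_one [CommSemiring R] {U₁ : Matrix ι ι R} {U₂ : Matrix κ κ R}
    (hU₁ : U₁ᵀ * U₁ = 1) (hU₂ : U₂ᵀ * U₂ = 1) :
    (U₁ ⊗ₖ U₂)ᵀ * (U₁ ⊗ₖ U₂) = 1 := by
  rw [← kroneckerMap_transpose, ← mul_kronecker_mul, hU₁, hU₂, one_kronecker_one]

theorem kronecker_transpose_mul_kroneckerSum_mul [CommSemiring R]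
    (L₁ U₁ V₁ : Matrix ι ι R) (L₂ U₂ V₂ : Matrix κ κ R) :
    (U₁ ⊗ₖ U₂)ᵀ * (L₁ ⊗ₖ (1 : Matrix κ κ R) + (1 : Matrix ι ι R) ⊗ₖ L₂) * (V₁ ⊗ₖ V₂) =
      (U₁ᵀ * L₁ * V₁) ⊗ₖ (U₂ᵀ * V₂) + (U₁ᵀ * V₁) ⊗ₖ (U₂ᵀ * L₂ * V₂) := by
  rw [← kroneckerMap_transpose, Matrix.mul_add, Matrix.add_mul, ← mul_kronecker_mul,
    ← mul_kronecker_mul, ← mul_kronecker_mul, ← mul_kronecker_mul, Matrix.mul_one,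
    Matrix.mul_one]

end Orthogonal

variable [Semiring R] [NoZeroDivisors R] {σ : ι → R} {τ : κ → R} {P : Matrix ι ι R}
  {Q : Matrix κ κ R}

theorem IsDiag.isDiag_left_of_diagonal_kronecker_add_kronecker_diagonal
    (h : (diagonal σ ⊗ₖ Q + P ⊗ₖ diagonal τ).IsDiag) (hτ : τ ≠ 0) : P.IsDiag := by
  intro i i' hii'
  obtain ⟨j, hj⟩ := Function.ne_iff.mp hτ
  have hentry := h (i := (i, j)) (j := (i', j)) (by simp [hii'])
  simp only [add_apply, kronecker_apply, diagonal_apply_ne _ hii', zero_mul, zero_add,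
    diagonal_apply_eq] at hentry
  exact (mul_eq_zero.mp hentry).resolve_right hj

theorem IsDiag.isDiag_right_of_diagonal_kronecker_add_kronecker_diagonal
    (h : (diagonal σ ⊗ₖ Q + P ⊗ₖ diagonal τ).IsDiag) (hσ : σ ≠ 0) : Q.IsDiag := by
  intro j j' hjj'
  obtain ⟨i, hi⟩ := Function.ne_iff.mp hσ
  have hentry := h (i := (i, j)) (j := (i, j')) (by simp [hjj'])
  simp only [add_apply, kronecker_apply, diagonal_apply_ne _ hjj', mul_zero, add_zero,
    diagonal_apply_eq] at hentry
  exact (mul_eq_zero.mp hentry).resolve_left hi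

end Matrix

theorem gft_coincide_implies_symmetric_general {N₁ N₂ : ℕ}
    (L₁ U₁ V₁ : Matrix (Fin N₁) (Fin N₁) ℝ) (L₂ U₂ V₂ : Matrix (Fin N₂) (Fin N₂) ℝ)
    (hU₁ : U₁ᵀ * U₁ = 1) (hV₁ : V₁ᵀ * V₁ = 1)
    (hU₂ : U₂ᵀ * U₂ = 1) (hV₂ : V₂ᵀ * V₂ = 1)
    (σ₁ : Fin N₁ → ℝ) (σ₂ : Fin N₂ → ℝ)
    (hL₁ : L₁ = U₁ * diagonal σ₁ * V₁ᵀ)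
    (hL₂ : L₂ = U₂ * diagonal σ₂ * V₂ᵀ)
    (d : Fin N₁ × Fin N₂ → ℝ)
    (hdecomp : L₁ ⊗ₖ (1 : Matrix (Fin N₂) (Fin N₂) ℝ) +
        (1 : Matrix (Fin N₁) (Fin N₁) ℝ) ⊗ₖ L₂ =
      (U₁ ⊗ₖ U₂) * diagonal d * (V₁ ⊗ₖ V₂)ᵀ)
    (hind₁ : ∀ c : ℝ, L₁ ≠ c • (1 : Matrix (Fin N₁) (Fin N₁) ℝ))
    (hind₂ : ∀ c : ℝ, L₂ ≠ c • (1 : Matrix (Fin N₂) (Fin N₂) ℝ)) :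
    L₁ᵀ = L₁ ∧ L₂ᵀ = L₂ := by
  have hconj : (diagonal σ₁ ⊗ₖ (U₂ᵀ * V₂) + (U₁ᵀ * V₁) ⊗ₖ diagonal σ₂).IsDiag := by
    rw [← transpose_mul_mul_eq_diagonal hU₁ hV₁ hL₁, ← transpose_mul_mul_eq_diagonal hU₂ hV₂ hL₂,
      ← kronecker_transpose_mul_kroneckerSum_mul,
      transpose_mul_mul_eq_diagonal (kronecker_transpose_mul_self_eq_one hU₁ hU₂)
        (kronecker_transpose_mul_self_eq_one hV₁ hV₂) hdecomp]
    exact isDiag_diagonal d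
  have hσ₁ : σ₁ ≠ 0 := by rintro rfl; exact hind₁ 0 (by simp [hL₁])
  have hσ₂ : σ₂ ≠ 0 := by rintro rfl; exact hind₂ 0 (by simp [hL₂])
  exact ⟨isSymm_of_eq_mul_diagonal_mul_transpose hV₁ hL₁
      (hconj.isDiag_left_of_diagonal_kronecker_add_kronecker_diagonal hσ₂),
    isSymm_of_eq_mul_diagonal_mul_transpose hV₂ hL₂
      (hconj.isDiag_right_of_diagonal_kronecker_add_kronecker_diagonal hσ₁)⟩

/-- Matrix form of Theorem 4: if the Kronecker sum `L₁ ⊗ I + I ⊗ L₂` admits an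
SVD-type decomposition with Kronecker-product orthogonal factors, and neither
`L₁` nor `L₂` is a scalar multiple of the identity, then `L₁` and `L₂` are
symmetric. -/
theorem gft_coincide_implies_symmetric {N₁ N₂ : ℕ}
    (L₁ U₁ V₁ : Matrix (Fin N₁) (Fin N₁) ℝ) (L₂ U₂ V₂ : Matrix (Fin N₂) (Fin N₂) ℝ)
    (hU₁ : U₁ᵀ * U₁ = 1) (hV₁ : V₁ᵀ * V₁ = 1)
    (hU₂ : U₂ᵀ * U₂ = 1) (hV₂ : V₂ᵀ * V₂ = 1)
    (σ₁ : Fin N₁ → ℝ) (σ₂ : Fin N₂ → ℝ)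
    (hσ₁ : ∀ i, 0 ≤ σ₁ i) (hσ₂ : ∀ j, 0 ≤ σ₂ j)
    (hL₁ : L₁ = U₁ * diagonal σ₁ * V₁ᵀ)
    (hL₂ : L₂ = U₂ * diagonal σ₂ * V₂ᵀ)
    (d : Fin N₁ × Fin N₂ → ℝ) (hd : ∀ p, 0 ≤ d p)
    (hdecomp : L₁ ⊗ₖ (1 : Matrix (Fin N₂) (Fin N₂) ℝ) +
        (1 : Matrix (Fin N₁) (Fin N₁) ℝ) ⊗ₖ L₂ =
      (U₁ ⊗ₖ U₂) * diagonal d * (V₁ ⊗ₖ V₂)ᵀ)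
    (hind₁ : ∀ c : ℝ, L₁ ≠ c • (1 : Matrix (Fin N₁) (Fin N₁) ℝ))
    (hind₂ : ∀ c : ℝ, L₂ ≠ c • (1 : Matrix (Fin N₂) (Fin N₂) ℝ)) :
    L₁ᵀ = L₁ ∧ L₂ᵀ = L₂ :=
  gft_coincide_implies_symmetric_general L₁ U₁ V₁ L₂ U₂ V₂ hU₁ hV₁ hU₂ hV₂ σ₁ σ₂ hL₁ hL₂ d hdecomp
    hind₁ hind₂
end
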